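/- For every positive integer n, the 6×6 determinant det_{0≤i,j≤5} binom(i+j+n, i-j+n) equals (2^5/(5·7!·9!))·(n+1)(n+2)^2(n+3)^3(n+4)^2(n+5)(2n+3)(2n+5)^2(2n+7)^2(2n+9). -/

import Mathlib

/-!
Since `binom (i + j + n) (i - j + n) = (i + j + n).choose (2 * j)`, column `j` of the matrix is
`(i + j + n)` falling-factorial of length `2 j`, divided by `(2 j)!`. Pulling the factorials out of
the columns leaves a determinant whose entries are polynomials in `n`; it is a polynomial
identity, verified by Laplace expansion over any commutative ring.
-/

/-- `binom a b` for integer `b`: the binomial coefficient, zero when `b < 0` or `b > a`. -/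
def binom (a : ℕ) (b : ℤ) : ℕ := if 0 ≤ b then a.choose b.toNat else 0

open Finset Matrix Nat

theorem binom_add_sub_add_eq_choose (n i j : ℕ) :
    binom (i + j + n) ((i : ℤ) - j + n) = (i + j + n).choose (2 * j) := by
  unfold binom
  rcases le_or_gt j (i + n) with h | h
  · rw [if_pos (by omega), show ((i : ℤ) - j + n).toNat = i + j + n - 2 * j by omega,
      Nat.choose_symm (by omega)]
  · rw [if_neg (by omega), Nat.choose_eq_zero_of_lt (by omega)]

set_option maxHeartbeats 4000000 in
/-- `17694720 = 2 ^ 5 * (0! * 2! * 4! * 6! * 8! * 10!) / (5 * 7! * 9!)`. -/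
theorem det_descPochhammer_add {R : Type*} [CommRing R] (x : R) :
    det (of fun i j : Fin 6 => (descPochhammer R (2 * j)).eval (i + j + x)) =
      17694720 * ((x + 1) * (x + 2) ^ 2 * (x + 3) ^ 3 * (x + 4) ^ 2 * (x + 5) *
        (2 * x + 3) * (2 * x + 5) ^ 2 * (2 * x + 7) ^ 2 * (2 * x + 9)) := by
  simp only [descPochhammer_eval_eq_prod_range]
  simp only [det_succ_row_zero, Nat.succ_eq_add_one, Nat.reduceAdd, Fin.isValue, of_apply,
    Fin.coe_ofNat_eq_mod, Nat.zero_mod, Nat.cast_zero, add_zero, submatrix_apply,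
    Fin.succ_zero_eq_one, Fin.succAbove, Nat.one_mod, Nat.cast_one, submatrix_submatrix,
    Function.comp_apply, Fin.succ_one_eq_two, Nat.reduceMod, Nat.cast_ofNat, Fin.reduceSucc,
    det_unique, Fin.default_eq_zero, Fin.castSucc_zero, Nat.mod_succ, Fin.sum_univ_succ, pow_zero,
    one_mul, lt_self_iff_false, ↓reduceIte, Fin.castSucc_one, univ_unique, Fin.val_succ,
    Fin.val_eq_zero, zero_add, pow_one, Fin.castSucc_succ, neg_mul, Fin.succ_pos,
    sum_neg_distrib, sum_singleton, Fin.reduceCastSucc, even_two, Even.neg_pow,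
    one_pow, Fin.reduceLT, Fin.lt_one_iff, Fin.reduceEq, mul_zero, range_zero, prod_empty,
    mul_one, prod_range_succ, range_one, prod_singleton, sub_zero,
    Nat.reduceMul, Nat.cast_add]
  ring

theorem binom_det_6_general (n : ℕ) :
    Matrix.det (Matrix.of (fun i j : Fin 6 =>
        (binom ((i : ℕ) + j + n) ((i : ℤ) - (j : ℤ) + n) : ℚ))) =
      (2 ^ 5 / (5 * Nat.factorial 7 * Nat.factorial 9 : ℚ)) *
        ((n + 1) * (n + 2) ^ 2 * (n + 3) ^ 3 * (n + 4) ^ 2 * (n + 5) *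
          (2 * n + 3) * (2 * n + 5) ^ 2 * (2 * n + 7) ^ 2 * (2 * n + 9)) := by
  have entry (i j : Fin 6) : (binom ((i : ℕ) + j + n) ((i : ℤ) - (j : ℤ) + n) : ℚ) =
      ((2 * j : ℕ)! : ℚ)⁻¹ * (descPochhammer ℚ (2 * j)).eval (i + j + (n : ℚ)) := by
    rw [binom_add_sub_add_eq_choose, Nat.cast_choose_eq_descPochhammer_div, div_eq_inv_mul]
    push_cast
    ring
  have scale := det_mul_row (fun j : Fin 6 => ((2 * j : ℕ)! : ℚ)⁻¹)
    (of fun i j : Fin 6 => (descPochhammer ℚ (2 * j)).eval (i + j + (n : ℚ)))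
  simp only [of_apply] at scale
  simp_rw [entry, scale, det_descPochhammer_add, Fin.prod_univ_six]
  norm_num [Nat.factorial]
  ring

theorem binom_det_6 (n : ℕ) (hn : 0 < n) :
    Matrix.det (Matrix.of (fun i j : Fin 6 =>
        (binom ((i : ℕ) + j + n) ((i : ℤ) - (j : ℤ) + n) : ℚ))) =
      (2 ^ 5 / (5 * Nat.factorial 7 * Nat.factorial 9 : ℚ)) *
        ((n + 1) * (n + 2) ^ 2 * (n + 3) ^ 3 * (n + 4) ^ 2 * (n + 5) *
          (2 * n + 3) * (2 * n + 5) ^ 2 * (2 * n + 7) ^ 2 * (2 * n + 9)) :=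
  binom_det_6_general n
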